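/- Let F be a finite metric space with at least two points and no focal points. Then ln 2 / ln(Δ(F)/δ(F)) ≤ dim_fH(F) ≤ ln(|F| − 1) / ln(Δ(F)/∇(F)), where |F| is the number of points of F. -/

import Mathlib

/-!
The minimum defining `H^s(F)` runs over finitely many optimal coverings, so `s ↦ H^s(F)` is
continuous. Without focal points `∇(F) < Δ(F)`, so an optimal covering has at least two members,
each of diameter at least `δ(F)`, whence `H^s(F) ≥ 2 δ(F)^s`. Pairing every point with a point at
distance at most `∇(F)` gives an optimal covering by at most `|F| - 1` sets, whence
`H^s(F) ≤ (|F| - 1) ∇(F)^s`. Comparing both bounds with `Δ(F)^s` confines every solution of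
`H^s(F) = Δ(F)^s` to the claimed interval, and the intermediate value theorem provides one.
-/

open Metric

namespace FinDim

variable {X : Type*} [MetricSpace X]

/-- `ν_F(a)`: the distance from `a` to a nearest other point of `F`. -/
noncomputable def nu (F : Finset X) (a : X) : ℝ :=
  sInf {r : ℝ | ∃ x ∈ F, x ≠ a ∧ r = dist a x}

/-- `δ(F)`: the separation of `F`, the minimum distance between distinct points. -/
noncomputable def sep (F : Finset X) : ℝ :=
  sInf {r : ℝ | ∃ x ∈ F, ∃ y ∈ F, x ≠ y ∧ r = dist x y}

/-- A 2-covering of `F`: a family of subsets of `F` covering `F`,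
each member having at least two elements. -/
def IsTwoCover (F : Finset X) (U : Finset (Finset X)) : Prop :=
  (∀ V ∈ U, V ⊆ F) ∧ (∀ V ∈ U, 2 ≤ V.card) ∧ ∀ a ∈ F, ∃ V ∈ U, a ∈ V

/-- `Δ(𝒰)`: maximum diameter of the members of the family `𝒰`. -/
noncomputable def coverDiam (U : Finset (Finset X)) : ℝ :=
  sSup {r : ℝ | ∃ V ∈ U, r = Metric.diam (V : Set X)}

/-- `∇(F)`: the covering diameter of `F`. -/
noncomputable def nablaF (F : Finset X) : ℝ :=
  sInf {r : ℝ | ∃ U : Finset (Finset X), IsTwoCover F U ∧ r = coverDiam U}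

/-- `a` is a focal point of `F`. -/
def IsFocal (F : Finset X) (a : X) : Prop :=
  a ∈ F ∧ ∀ x ∈ F, x ≠ a → dist a x = Metric.diam (F : Set X)

/-- `H^s_𝒰(F) = Σ_{U ∈ 𝒰} Δ(U)^s`. -/
noncomputable def Hcov (U : Finset (Finset X)) (s : ℝ) : ℝ :=
  ∑ V ∈ U, Metric.diam (V : Set X) ^ s

/-- `H^s(F)`: minimum of `H^s_𝒰(F)` over 2-coverings `𝒰` with `Δ(𝒰) = ∇(F)`. -/
noncomputable def HH (F : Finset X) (s : ℝ) : ℝ :=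
  sInf {h : ℝ | ∃ U : Finset (Finset X),
    IsTwoCover F U ∧ coverDiam U = nablaF F ∧ h = Hcov U s}

/-- The finite Hausdorff dimension: the unique `s₀ ∈ (0,∞)` with
`H^{s₀}(F) = Δ(F)^{s₀}` (when `F` has no focal points). -/
noncomputable def dimfH (F : Finset X) : ℝ :=
  sInf {s : ℝ | 0 < s ∧ HH F s = Metric.diam (F : Set X) ^ s}

/-- `T_{∇(F)}(F)`: the minimal cardinality of a 2-covering `𝒰` with `Δ(𝒰) = ∇(F)`. -/
noncomputable def Tmin (F : Finset X) : ℕ :=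
  sInf {n : ℕ | ∃ U : Finset (Finset X),
    IsTwoCover F U ∧ coverDiam U = nablaF F ∧ U.card = n}

/-- The finite box dimension `dim_fB(F) = ln T_{∇(F)}(F) / ln (Δ(F)/∇(F))`. -/
noncomputable def dimfB (F : Finset X) : ℝ :=
  Real.log (Tmin F) / Real.log (Metric.diam (F : Set X) / nablaF F)

/-- `ν_A(x)` for a subset `A` of a metric space. -/
noncomputable def nuSet {Z : Type*} [MetricSpace Z] (A : Set Z) (x : Z) : ℝ :=
  sInf {r : ℝ | ∃ y ∈ A, y ≠ x ∧ r = dist x y}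

/-- `∇(A) = sup {ν_A(x) : x ∈ A}` for a subset `A` of a metric space. -/
noncomputable def nablaSet {Z : Type*} [MetricSpace Z] (A : Set Z) : ℝ :=
  sSup {r : ℝ | ∃ x ∈ A, r = nuSet A x}

end FinDim

namespace FinDim

section RealPowers

open Real

variable {a D c s : ℝ}

theorem mul_rpow_le_rpow_iff (ha : 0 < a) (haD : a < D) (hc : 0 < c) :
    c * a ^ s ≤ D ^ s ↔ log c / log (D / a) ≤ s := by
  have hDa : 1 < D / a := (one_lt_div ha).mpr haD
  rw [div_le_iff₀ (log_pos hDa), ← le_rpow_iff_log_le hc (by linarith),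
    div_rpow (ha.le.trans haD.le) ha.le, le_div_iff₀ (rpow_pos_of_pos ha s)]

theorem rpow_le_mul_rpow_iff (ha : 0 < a) (haD : a < D) (hc : 0 < c) :
    D ^ s ≤ c * a ^ s ↔ s ≤ log c / log (D / a) := by
  have hDa : 1 < D / a := (one_lt_div ha).mpr haD
  rw [le_div_iff₀ (log_pos hDa), ← rpow_le_iff_le_log (by linarith) hc,
    div_rpow (ha.le.trans haD.le) ha.le, div_le_iff₀ (rpow_pos_of_pos ha s)]

variable {f : ℝ → ℝ} {b k : ℝ}

/-- Since `k > 1`, the lower bound puts `f` above `D ^ s` for small `s > 0`, and the upper bound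
puts it below for large `s`. -/
theorem exists_pos_eq_rpow_of_bounds (hf : Continuous f) (ha : 0 < a) (haD : a < D)
    (hb : 0 < b) (hbD : b < D) (hk : 1 < k) (hc : 0 < c)
    (hlow : ∀ s, 0 ≤ s → k * a ^ s ≤ f s) (hup : ∀ s, 0 ≤ s → f s ≤ c * b ^ s) :
    ∃ s, 0 < s ∧ f s = D ^ s := by
  set L := log k / log (D / a)
  have hL : 0 < L := div_pos (log_pos hk) (log_pos ((one_lt_div ha).mpr haD))
  set M := max (L / 2) (log c / log (D / b) + 1)
  have hLM : L / 2 ≤ M := le_max_left _ _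
  have hsmall : D ^ (L / 2) < f (L / 2) :=
    (not_le.mp ((mul_rpow_le_rpow_iff ha haD (by linarith)).not.mpr (by linarith))).trans_le
      (hlow _ (by positivity))
  have hlarge : f M < D ^ M :=
    (hup M (by positivity)).trans_lt (not_le.mp ((rpow_le_mul_rpow_iff hb hbD hc).not.mpr
      (by linarith [le_max_right (L / 2) (log c / log (D / b) + 1)])))
  obtain ⟨s, hs, hfs⟩ := intermediate_value_Icc' hLM
    (hf.sub (continuous_const_rpow (by linarith : D ≠ 0))).continuousOn
    (show (0 : ℝ) ∈ Set.Icc (f M - D ^ M) (f (L / 2) - D ^ (L / 2)) from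
      ⟨by linarith, by linarith⟩)
  exact ⟨s, by linarith [hs.1], sub_eq_zero.mp hfs⟩

theorem sInf_pos_eq_rpow_mem_Icc (hf : Continuous f) (ha : 0 < a) (haD : a < D)
    (hb : 0 < b) (hbD : b < D) (hk : 1 < k) (hc : 0 < c)
    (hlow : ∀ s, 0 ≤ s → k * a ^ s ≤ f s) (hup : ∀ s, 0 ≤ s → f s ≤ c * b ^ s) :
    sInf {s | 0 < s ∧ f s = D ^ s} ∈ Set.Icc (log k / log (D / a)) (log c / log (D / b)) := by
  obtain ⟨s₀, hs₀, hfs₀⟩ := exists_pos_eq_rpow_of_bounds hf ha haD hb hbD hk hc hlow hup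
  refine ⟨le_csInf ⟨s₀, hs₀, hfs₀⟩ ?_, ?_⟩
  · rintro s ⟨hs, hfs⟩
    exact (mul_rpow_le_rpow_iff ha haD (by linarith)).mp (hfs ▸ hlow s hs.le)
  · have hbdd : BddBelow {s | 0 < s ∧ f s = D ^ s} := ⟨0, fun s hs => hs.1.le⟩
    exact (csInf_le hbdd ⟨hs₀, hfs₀⟩).trans
      ((rpow_le_mul_rpow_iff hb hbD hc).mp (hfs₀ ▸ hup s₀ hs₀.le))

end RealPowers

section Combinatorics

variable {X : Type*} {F : Finset X} {U : Finset (Finset X)}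

theorem isTwoCover_singleton (hF : 2 ≤ F.card) : IsTwoCover F {F} :=
  ⟨by simp, by simpa using hF, fun a ha => ⟨F, Finset.mem_singleton_self F, ha⟩⟩

theorem IsTwoCover.nonempty (hU : IsTwoCover F U) (hF : F.Nonempty) : U.Nonempty := by
  obtain ⟨a, ha⟩ := hF
  obtain ⟨V, hV, -⟩ := hU.2.2 a ha
  exact ⟨V, hV⟩

/-- The pair chosen for one point `p` also serves its partner, which saves one member. -/
theorem exists_isTwoCover_pairs [DecidableEq X] (P : X → X → Prop) (hF : F.Nonempty)
    (hP : ∀ a ∈ F, ∃ b ∈ F, b ≠ a ∧ P a b) :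
    ∃ U, IsTwoCover F U ∧ U.card < F.card ∧ ∀ V ∈ U, ∃ a b, P a b ∧ V = {a, b} := by
  choose! g hgF hgne hgP using hP
  obtain ⟨p, hp⟩ := hF
  set U : Finset (Finset X) := insert {p, g p} ((F \ {p, g p}).image fun a => {a, g a})
  have hmem : ∀ V ∈ U, ∃ a ∈ F, V = {a, g a} := by
    intro V hV
    rcases Finset.mem_insert.mp hV with rfl | hV
    · exact ⟨p, hp, rfl⟩
    · obtain ⟨a, ha, rfl⟩ := Finset.mem_image.mp hV
      exact ⟨a, (Finset.mem_sdiff.mp ha).1, rfl⟩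
  have hpair : {p, g p} ⊆ F := Finset.insert_subset hp (Finset.singleton_subset_iff.mpr (hgF p hp))
  refine ⟨U, ⟨?_, ?_, ?_⟩, ?_, ?_⟩
  · intro V hV
    obtain ⟨a, ha, rfl⟩ := hmem V hV
    exact Finset.insert_subset ha (Finset.singleton_subset_iff.mpr (hgF a ha))
  · intro V hV
    obtain ⟨a, ha, rfl⟩ := hmem V hV
    exact (Finset.card_pair (hgne a ha).symm).ge
  · intro a ha
    by_cases hap : a ∈ ({p, g p} : Finset X)
    · exact ⟨{p, g p}, Finset.mem_insert_self _ _, hap⟩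
    · exact ⟨{a, g a}, Finset.mem_insert_of_mem (Finset.mem_image_of_mem _
        (Finset.mem_sdiff.mpr ⟨ha, hap⟩)), Finset.mem_insert_self _ _⟩
  · calc U.card ≤ ((F \ {p, g p}).image fun a => {a, g a}).card + 1 := Finset.card_insert_le _ _
      _ ≤ (F \ {p, g p}).card + 1 := by gcongr; exact Finset.card_image_le
      _ = F.card - 2 + 1 := by
        rw [Finset.card_sdiff_of_subset hpair, Finset.card_pair (hgne p hp).symm]
      _ < F.card := by
        have := Finset.card_le_card hpair
        rw [Finset.card_pair (hgne p hp).symm] at this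
        omega
  · intro V hV
    obtain ⟨a, ha, rfl⟩ := hmem V hV
    exact ⟨a, g a, hgP a ha, rfl⟩

open scoped Classical in
noncomputable def twoCovers (F : Finset X) : Finset (Finset (Finset X)) :=
  F.powerset.powerset.filter (IsTwoCover F)

theorem mem_twoCovers : U ∈ twoCovers F ↔ IsTwoCover F U := by
  classical
  simp only [twoCovers, Finset.mem_filter, Finset.mem_powerset, and_iff_right_iff_imp]
  exact fun hU V hV => Finset.mem_powerset.mpr (hU.1 V hV)

end Combinatorics

variable {X : Type*} [MetricSpace X] {F V : Finset X} {U : Finset (Finset X)}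

theorem coverDiam_eq_sup' (hU : U.Nonempty) :
    coverDiam U = U.sup' hU (fun V => diam (V : Set X)) := by
  rw [Finset.sup'_eq_csSup_image, coverDiam]
  congr 1
  ext r
  simp [eq_comm]

theorem diam_le_coverDiam (hV : V ∈ U) : diam (V : Set X) ≤ coverDiam U := by
  rw [coverDiam_eq_sup' ⟨V, hV⟩]
  exact Finset.le_sup' (f := fun V : Finset X => diam (V : Set X)) hV

theorem coverDiam_singleton (V : Finset X) : coverDiam {V} = diam (V : Set X) := by
  rw [coverDiam_eq_sup' (Finset.singleton_nonempty V), Finset.sup'_singleton]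

theorem IsTwoCover.one_lt_card (hU : IsTwoCover F U) (hF : F.Nonempty)
    (hlt : coverDiam U < diam (F : Set X)) : 1 < U.card := by
  by_contra hle
  obtain ⟨V, rfl⟩ := Finset.card_eq_one.mp
    (le_antisymm (not_lt.mp hle) (hU.nonempty hF).card_pos)
  have hVF : V = F := (hU.1 V (Finset.mem_singleton_self V)).antisymm fun a ha => by
    obtain ⟨W, hW, haW⟩ := hU.2.2 a ha
    rwa [Finset.mem_singleton.mp hW] at haW
  rw [coverDiam_singleton, hVF] at hlt
  exact lt_irrefl _ hlt

theorem sep_eq_inf' (h : F.offDiag.Nonempty) :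
    sep F = F.offDiag.inf' h (fun p => dist p.1 p.2) := by
  rw [Finset.inf'_eq_csInf_image, sep]
  congr 1
  ext r
  simp [eq_comm, and_assoc]

theorem sep_nonneg (F : Finset X) : 0 ≤ sep F :=
  Real.sInf_nonneg fun _ ⟨_, _, _, _, _, hr⟩ => hr ▸ dist_nonneg

theorem sep_le_dist {x y : X} (hx : x ∈ F) (hy : y ∈ F) (hxy : x ≠ y) : sep F ≤ dist x y := by
  have hxy' : (x, y) ∈ F.offDiag := Finset.mem_offDiag.mpr ⟨hx, hy, hxy⟩
  rw [sep_eq_inf' ⟨_, hxy'⟩]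
  exact Finset.inf'_le (fun p : X × X => dist p.1 p.2) hxy'

theorem sep_pos (hF : 2 ≤ F.card) : 0 < sep F := by
  have hne : F.offDiag.Nonempty := by
    obtain ⟨x, hx, y, hy, hxy⟩ := Finset.one_lt_card.mp hF
    exact ⟨(x, y), Finset.mem_offDiag.mpr ⟨hx, hy, hxy⟩⟩
  rw [sep_eq_inf' hne, Finset.lt_inf'_iff]
  intro p hp
  exact dist_pos.mpr (Finset.mem_offDiag.mp hp).2.2

theorem sep_le_diam (hVF : V ⊆ F) (hV : 2 ≤ V.card) : sep F ≤ diam (V : Set X) := by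
  obtain ⟨x, hx, y, hy, hxy⟩ := Finset.one_lt_card.mp hV
  exact (sep_le_dist (hVF hx) (hVF hy) hxy).trans
    (dist_le_diam_of_mem V.finite_toSet.isBounded hx hy)

theorem exists_dist_lt_diam_of_not_isFocal {a : X} (ha : a ∈ F) (h : ¬ IsFocal F a) :
    ∃ x ∈ F, x ≠ a ∧ dist a x < diam (F : Set X) := by
  simp only [IsFocal, ha, true_and, not_forall] at h
  obtain ⟨x, hx, hxa, hne⟩ := h
  exact ⟨x, hx, hxa, (dist_le_diam_of_mem F.finite_toSet.isBounded ha hx).lt_of_ne hne⟩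

theorem sep_lt_diam_of_not_isFocal {a : X} (ha : a ∈ F) (h : ¬ IsFocal F a) :
    sep F < diam (F : Set X) := by
  obtain ⟨x, hx, hxa, hlt⟩ := exists_dist_lt_diam_of_not_isFocal ha h
  exact (sep_le_dist ha hx hxa.symm).trans_lt hlt

theorem nablaF_eq_inf' (h : (twoCovers F).Nonempty) :
    nablaF F = (twoCovers F).inf' h coverDiam := by
  rw [Finset.inf'_eq_csInf_image, nablaF]
  congr 1
  ext r
  simp [mem_twoCovers, eq_comm]

theorem nablaF_le_coverDiam (hU : IsTwoCover F U) : nablaF F ≤ coverDiam U := by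
  rw [nablaF_eq_inf' ⟨U, mem_twoCovers.mpr hU⟩]
  exact Finset.inf'_le _ (mem_twoCovers.mpr hU)

theorem exists_isTwoCover_coverDiam_eq_nablaF (hF : 2 ≤ F.card) :
    ∃ U, IsTwoCover F U ∧ coverDiam U = nablaF F := by
  have hne : (twoCovers F).Nonempty := ⟨{F}, mem_twoCovers.mpr (isTwoCover_singleton hF)⟩
  obtain ⟨U, hU, hUeq⟩ := Finset.exists_mem_eq_inf' hne coverDiam
  exact ⟨U, mem_twoCovers.mp hU, by rw [nablaF_eq_inf' hne, hUeq]⟩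

open scoped Classical in
noncomputable def optimalCovers (F : Finset X) : Finset (Finset (Finset X)) :=
  (twoCovers F).filter (fun U => coverDiam U = nablaF F)

theorem mem_optimalCovers : U ∈ optimalCovers F ↔ IsTwoCover F U ∧ coverDiam U = nablaF F := by
  classical
  simp only [optimalCovers, Finset.mem_filter, mem_twoCovers]

theorem optimalCovers_nonempty (hF : 2 ≤ F.card) : (optimalCovers F).Nonempty := by
  obtain ⟨U, hU⟩ := exists_isTwoCover_coverDiam_eq_nablaF hF
  exact ⟨U, mem_optimalCovers.mpr hU⟩

theorem HH_eq_inf' (h : (optimalCovers F).Nonempty) (s : ℝ) :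
    HH F s = (optimalCovers F).inf' h (Hcov · s) := by
  rw [Finset.inf'_eq_csInf_image, HH]
  congr 1
  ext r
  simp [mem_optimalCovers, eq_comm, and_assoc]

theorem exists_dist_le_nablaF (hF : 2 ≤ F.card) {a : X} (ha : a ∈ F) :
    ∃ b ∈ F, b ≠ a ∧ dist a b ≤ nablaF F := by
  obtain ⟨U, hU, hUeq⟩ := exists_isTwoCover_coverDiam_eq_nablaF hF
  obtain ⟨V, hV, haV⟩ := hU.2.2 a ha
  obtain ⟨b, hbV, hba⟩ := Finset.exists_mem_ne (hU.2.1 V hV) a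
  refine ⟨b, hU.1 V hV hbV, hba, ?_⟩
  calc dist a b ≤ diam (V : Set X) := dist_le_diam_of_mem V.finite_toSet.isBounded haV hbV
    _ ≤ coverDiam U := diam_le_coverDiam hV
    _ = nablaF F := hUeq

theorem sep_le_nablaF (hF : 2 ≤ F.card) : sep F ≤ nablaF F := by
  obtain ⟨a, ha⟩ := Finset.card_pos.mp (by omega : 0 < F.card)
  obtain ⟨b, hb, hba, hab⟩ := exists_dist_le_nablaF hF ha
  exact (sep_le_dist ha hb hba.symm).trans hab

theorem exists_mem_optimalCovers_card_lt (hF : 2 ≤ F.card) :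
    ∃ U ∈ optimalCovers F, U.card < F.card := by
  classical
  obtain ⟨U, hU, hcard, hpairs⟩ := exists_isTwoCover_pairs (fun a b => dist a b ≤ nablaF F)
    (Finset.card_pos.mp (by omega)) fun a ha => exists_dist_le_nablaF hF ha
  refine ⟨U, mem_optimalCovers.mpr ⟨hU, le_antisymm ?_ (nablaF_le_coverDiam hU)⟩, hcard⟩
  rw [coverDiam_eq_sup' (hU.nonempty (Finset.card_pos.mp (by omega))), Finset.sup'_le_iff]
  intro V hV
  obtain ⟨a, b, hab, rfl⟩ := hpairs V hV
  rwa [Finset.coe_pair, diam_pair]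

theorem nablaF_lt_diam (hF : F.Nonempty) (hfoc : ∀ a, ¬ IsFocal F a) :
    nablaF F < diam (F : Set X) := by
  classical
  obtain ⟨U, hU, -, hpairs⟩ := exists_isTwoCover_pairs (fun a b => dist a b < diam (F : Set X))
    hF fun a ha => exists_dist_lt_diam_of_not_isFocal ha (hfoc a)
  refine (nablaF_le_coverDiam hU).trans_lt ?_
  rw [coverDiam_eq_sup' (hU.nonempty hF), Finset.sup'_lt_iff]
  intro V hV
  obtain ⟨a, b, hab, rfl⟩ := hpairs V hV
  rwa [Finset.coe_pair, diam_pair]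

theorem Hcov_le_card_mul (U : Finset (Finset X)) {s : ℝ} (hs : 0 ≤ s) :
    Hcov U s ≤ U.card * coverDiam U ^ s := by
  rw [← nsmul_eq_mul]
  exact Finset.sum_le_card_nsmul _ _ _ fun V hV =>
    Real.rpow_le_rpow diam_nonneg (diam_le_coverDiam hV) hs

theorem IsTwoCover.two_mul_sep_rpow_le_Hcov (hU : IsTwoCover F U) (hcard : 1 < U.card)
    {s : ℝ} (hs : 0 ≤ s) : 2 * sep F ^ s ≤ Hcov U s := by
  calc 2 * sep F ^ s ≤ U.card • sep F ^ s := by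
        rw [nsmul_eq_mul]
        exact mul_le_mul_of_nonneg_right (by exact_mod_cast hcard)
          (Real.rpow_nonneg (sep_nonneg F) s)
    _ ≤ Hcov U s := Finset.card_nsmul_le_sum _ _ _ fun V hV =>
        Real.rpow_le_rpow (sep_nonneg F) (sep_le_diam (hU.1 V hV) (hU.2.1 V hV)) hs

theorem two_mul_sep_rpow_le_HH (hF : 2 ≤ F.card) (hlt : nablaF F < diam (F : Set X))
    {s : ℝ} (hs : 0 ≤ s) : 2 * sep F ^ s ≤ HH F s := by
  rw [HH_eq_inf' (optimalCovers_nonempty hF), Finset.le_inf'_iff]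
  intro U hU
  obtain ⟨hcov, hdiam⟩ := mem_optimalCovers.mp hU
  exact hcov.two_mul_sep_rpow_le_Hcov
    (hcov.one_lt_card (Finset.card_pos.mp (by omega)) (hdiam ▸ hlt)) hs

theorem HH_le_card_sub_one_mul (hF : 2 ≤ F.card) {s : ℝ} (hs : 0 ≤ s) :
    HH F s ≤ ((F.card : ℝ) - 1) * nablaF F ^ s := by
  obtain ⟨U, hU, hcard⟩ := exists_mem_optimalCovers_card_lt hF
  have hcard' : (U.card : ℝ) ≤ F.card - 1 := by
    rw [le_sub_iff_add_le]; exact_mod_cast hcard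
  calc HH F s ≤ Hcov U s := by
        rw [HH_eq_inf' ⟨U, hU⟩]; exact Finset.inf'_le _ hU
    _ ≤ U.card * nablaF F ^ s := (mem_optimalCovers.mp hU).2 ▸ Hcov_le_card_mul U hs
    _ ≤ ((F.card : ℝ) - 1) * nablaF F ^ s := by
        gcongr
        exact Real.rpow_nonneg ((sep_nonneg F).trans (sep_le_nablaF hF)) s

theorem continuous_HH (hF : 2 ≤ F.card) : Continuous (HH F) := by
  have hne := optimalCovers_nonempty hF
  rw [funext (HH_eq_inf' hne)]
  refine Continuous.finset_inf'_apply hne fun U hU => continuous_finsetSum _ fun V hV => ?_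
  have hcov := (mem_optimalCovers.mp hU).1
  exact Real.continuous_const_rpow
    ((sep_pos hF).trans_le (sep_le_diam (hcov.1 V hV) (hcov.2.1 V hV))).ne'

end FinDim

open FinDim in
/-- `ln 2 / ln(Δ(F)/δ(F)) ≤ dim_fH(F) ≤ ln(|F|−1) / ln(Δ(F)/∇(F))`. -/
theorem stmt6 {X : Type*} [MetricSpace X] (F : Finset X) (hF : 2 ≤ F.card)
    (hfoc : ∀ a, ¬ IsFocal F a) :
    Real.log 2 / Real.log (Metric.diam (F : Set X) / sep F) ≤ dimfH F ∧
    dimfH F ≤ Real.log ((F.card : ℝ) - 1) / Real.log (Metric.diam (F : Set X) / nablaF F) := by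
  obtain ⟨a, ha⟩ : F.Nonempty := Finset.card_pos.mp (by omega)
  have hsep := sep_pos hF
  have hnabla := nablaF_lt_diam ⟨a, ha⟩ hfoc
  have hcard : (0 : ℝ) < F.card - 1 := by
    have : (2 : ℝ) ≤ F.card := by exact_mod_cast hF
    linarith
  exact sInf_pos_eq_rpow_mem_Icc (continuous_HH hF) hsep (sep_lt_diam_of_not_isFocal ha (hfoc a))
    (hsep.trans_le (sep_le_nablaF hF)) hnabla one_lt_two hcard
    (fun _ => two_mul_sep_rpow_le_HH hF hnabla) (fun _ => HH_le_card_sub_one_mul hF)
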